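/- arXiv:1704.02413 — 6 statements merged into one kernel-verified Lean document; each statement's English description precedes it below -/
import Mathlib

section
/- Let 0 < m < l. An l-restricted partition λ is m-distinguished if and only if its transpose λ' belongs to Φ_{l−m}. -/
noncomputable section

/-- `p : ℕ → ℕ` represents the partition `λ` with `p i = λ_{i+1}` (0-indexed parts):
a weakly decreasing, eventually zero sequence. -/
def IsPartition (p : ℕ → ℕ) : Prop :=
  (∀ i j, i ≤ j → p j ≤ p i) ∧ ∃ N, ∀ i, N ≤ i → p i = 0

/-- `ℓ(λ)`, the number of nonzero parts. -/
def plen (p : ℕ → ℕ) : ℕ := sInf {N | p N = 0}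

/-- the degree (number of boxes) of the partition. -/
def pdeg (p : ℕ → ℕ) : ℕ := ∑ i ∈ Finset.range (plen p), p i

/-- `λ` is `l`-regular: no `l` consecutive parts are equal and nonzero. -/
def IsLRegular (l : ℕ) (p : ℕ → ℕ) : Prop :=
  ∀ i, p i ≠ 0 → p (i + l - 1) ≠ p i

/-- `λ` is `l`-restricted: `λ_i - λ_{i+1} < l` for all `i`. -/
def IsLRestricted (l : ℕ) (p : ℕ → ℕ) : Prop :=
  ∀ i, p i - p (i + 1) < l

/-- the transpose (conjugate) partition. -/
def conjP (p : ℕ → ℕ) : ℕ → ℕ :=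
  fun j => ((Finset.range (plen p)).filter fun i => j < p i).card

/-- the minimal `h ≥ 1` with `λ_1 - λ_{h+1} + h ≥ l`: when `e(λ) > l`, the first
`l`-segment of the `l`-edge lies in rows `1, …, h`. -/
def firstSeg (l : ℕ) (p : ℕ → ℕ) : ℕ := sInf {h | 1 ≤ h ∧ l ≤ p 0 - p h + h}

/-- removal of the `l`-edge (with fuel): if `e(λ) ≤ l` the whole edge is removed,
otherwise the first `l`-segment is removed from rows `1, …, h` (`h = firstSeg`) and one
recurses on `(λ_{h+1}, λ_{h+2}, …)`. -/
def removeLEdgeAux (l : ℕ) : ℕ → (ℕ → ℕ) → ℕ → ℕ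
  | 0, _ => fun _ => 0
  | n + 1, p =>
    if p 0 = 0 then fun _ => 0
    else if p 0 + plen p - 1 ≤ l then fun i => p (i + 1) - 1
    else fun i =>
      if i + 1 < firstSeg l p then p (i + 1) - 1
      else if i + 1 = firstSeg l p then p 0 + firstSeg l p - 1 - l
      else removeLEdgeAux l n (fun j => p (j + firstSeg l p)) (i - firstSeg l p)

/-- the partition obtained by removing the `l`-edge of `λ`. -/
def removeLEdge (l : ℕ) (p : ℕ → ℕ) : ℕ → ℕ := removeLEdgeAux l (plen p) p

/-- `e_l(λ)`, the number of nodes of the `l`-edge. -/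
def elen (l : ℕ) (p : ℕ → ℕ) : ℕ := pdeg p - pdeg (removeLEdge l p)

/-- the length of `Mull(λ)` prescribed by the defining recursion of the Mullineux map. -/
def mullLen (l : ℕ) (p : ℕ → ℕ) : ℕ :=
  if l ∣ elen l p then elen l p - plen p else elen l p - plen p + 1

/-- the Mullineux map (with fuel): `Mull(0) = 0` and, for `λ ≠ 0` `l`-regular with `ν`
obtained from `λ` by removing the `l`-edge, `Mull(λ)` is the unique `l`-regular partition
whose `l`-edge removal leaves `Mull(ν)` and whose length is `e_l(λ) - ℓ(λ)` if
`l ∣ e_l(λ)` and `e_l(λ) - ℓ(λ) + 1` otherwise. -/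
def mullAux (l : ℕ) : ℕ → (ℕ → ℕ) → ℕ → ℕ
  | 0, _ => fun _ => 0
  | n + 1, p =>
    if p 0 = 0 then fun _ => 0
    else
      Classical.epsilon fun μ : ℕ → ℕ =>
        IsPartition μ ∧ IsLRegular l μ ∧
          removeLEdge l μ = mullAux l n (removeLEdge l p) ∧ plen μ = mullLen l p

/-- the Mullineux map. -/
def mull (l : ℕ) (p : ℕ → ℕ) : ℕ → ℕ := mullAux l (pdeg p) p

/-- the list of Mullineux components (with fuel). -/
def mullCompsAux (l : ℕ) : ℕ → (ℕ → ℕ) → List (ℕ → ℕ)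
  | 0, _ => []
  | n + 1, p =>
    if p 0 = 0 then []
    else if elen l p ≤ l then [p]
    else (fun i => if i < firstSeg l p then p i else 0) ::
      mullCompsAux l n (fun j => p (j + firstSeg l p))

/-- the Mullineux components of `λ`. -/
def mullComps (l : ℕ) (p : ℕ → ℕ) : List (ℕ → ℕ) := mullCompsAux l (plen p) p

/-- edge `l`-connectedness (with fuel): consecutive Mullineux components `α, ρ` satisfy
`α_1 - ρ_1 + ℓ(α) = l`. -/
def edgeConnAux (l : ℕ) : ℕ → (ℕ → ℕ) → Prop
  | 0, _ => True
  | n + 1, p =>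
    if elen l p ≤ l then True
    else p 0 + firstSeg l p = l + p (firstSeg l p) ∧
      edgeConnAux l n fun j => p (j + firstSeg l p)

/-- `λ` is edge `l`-connected. -/
def EdgeLConnected (l : ℕ) (p : ℕ → ℕ) : Prop := edgeConnAux l (plen p) p

/-- the node `(i+1, λ_{i+1})` (in row `i+1`, 1-indexed) is a removable node. -/
def Removable (p : ℕ → ℕ) (i : ℕ) : Prop := p (i + 1) < p i

/-- removal of the removable node in row `i+1`. -/
def removeNode (p : ℕ → ℕ) (i : ℕ) : ℕ → ℕ := fun k => if k = i then p i - 1 else p k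

/-- there is an addable node `(i+1, λ_{i+1} + 1)` in row `i+1` (1-indexed). -/
def Addable (p : ℕ → ℕ) (i : ℕ) : Prop := i ≤ plen p ∧ (i = 0 ∨ p i < p (i - 1))

/-- the removable node in row `i+1` is suitable: its residue (mod `l`) differs from the
residue of every lower addable node. -/
def Suitable (l : ℕ) (p : ℕ → ℕ) (i : ℕ) : Prop :=
  Removable p i ∧ ∀ j, i < j → Addable p j →
    ¬ ((p j : ℤ) - (j : ℤ) ≡ (p i : ℤ) - (i : ℤ) - 1 [ZMOD (l : ℤ)])

/-- the removable node in row `i+1` is co-suitable: its transpose node is a suitable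
node of the transpose partition. -/
def CoSuitable (l : ℕ) (p : ℕ → ℕ) (i : ℕ) : Prop :=
  Removable p i ∧ Suitable l (conjP p) (p i - 1)

/-- `Φ_m`: partitions with at most `m` parts and `λ_1 - λ_m ≤ l - m`. -/
def Phi (l m : ℕ) : Set (ℕ → ℕ) :=
  {p | IsPartition p ∧ plen p ≤ m ∧ p 0 - p (m - 1) ≤ l - m}

/-- `λ` is `m`-distinguished: `λ = λ⁰ + lλ̄` with
`λ⁰ = ((l-m)^k, a_1, …, a_m)`, `l - m > a_1 ≥ … ≥ a_m ≥ 0`, and `λ̄` a partition with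
`λ̄_1 ≤ m - 1`. -/
def IsDistinguished (l m : ℕ) (p : ℕ → ℕ) : Prop :=
  ∃ (k : ℕ) (a : ℕ → ℕ) (pb : ℕ → ℕ),
    IsPartition pb ∧ pb 0 < m ∧
    (∀ i j, i ≤ j → a j ≤ a i) ∧ a 0 < l - m ∧ (∀ i, m ≤ i → a i = 0) ∧
    ∀ i, p i = (if i < k then l - m else a (i - k)) + l * pb i

/-- `q` is obtained from `p` by removing a skew `l`-hook (spanning rows `a+1, …, b+1`,
1-indexed). -/
def IsHookRemoval (l : ℕ) (p q : ℕ → ℕ) : Prop :=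
  IsPartition q ∧ ∃ a b : ℕ, a ≤ b ∧
    (∀ i, i < a → q i = p i) ∧
    (∀ i, a ≤ i → i < b → q i + 1 = p (i + 1)) ∧
    q b + l = p a + (b - a) ∧
    ∀ i, b < i → q i = p i

/-- `q` is the `l`-core of `p`: obtained by repeatedly removing skew `l`-hooks until
none remain. -/
def IsCoreOf (l : ℕ) (p q : ℕ → ℕ) : Prop :=
  Relation.ReflTransGen (fun x y => IsHookRemoval l x y) p q ∧ ∀ r, ¬ IsHookRemoval l q r

/-- the `l`-core of `p`. -/
def lCore (l : ℕ) (p : ℕ → ℕ) : ℕ → ℕ := Classical.epsilon (IsCoreOf l p)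


lemma plen_pos_iff (p : ℕ → ℕ) (hp : IsPartition p) :
    (∀ i, i < plen p → p i ≠ 0) ∧ (∀ i, plen p ≤ i → p i = 0) := by
  obtain ⟨hmono, N, hN⟩ := hp
  have hne : {N | p N = 0}.Nonempty := ⟨N, hN N le_rfl⟩
  have h0 : p (plen p) = 0 := Nat.sInf_mem hne
  constructor
  · intro i hi hpi
    exact absurd (Nat.sInf_le (show i ∈ {N | p N = 0} from hpi)) (not_le.mpr hi)
  · intro i hi
    have := hmono _ _ hi
    omega

lemma conjP_anti (p : ℕ → ℕ) (i j : ℕ) (hij : i ≤ j) : conjP p j ≤ conjP p i := by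
  apply Finset.card_le_card
  intro x hx
  simp only [Finset.mem_filter, Finset.mem_range] at *
  exact ⟨hx.1, lt_of_le_of_lt hij hx.2⟩

lemma conjP_zero_of_le (p : ℕ → ℕ) (hp : IsPartition p) (j : ℕ) (hj : p 0 ≤ j) :
    conjP p j = 0 := by
  unfold conjP
  rw [Finset.card_eq_zero, Finset.filter_eq_empty_iff]
  intro i _
  exact not_lt.mpr (le_trans (hp.1 0 i (Nat.zero_le i)) hj)

lemma conjP_zeroth (p : ℕ → ℕ) (hp : IsPartition p) : conjP p 0 = plen p := by
  unfold conjP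
  rw [Finset.filter_true_of_mem, Finset.card_range]
  intro i hi
  exact Nat.pos_of_ne_zero ((plen_pos_iff p hp).1 i (Finset.mem_range.mp hi))

/-- Let `0 < m < l`. An `l`-restricted partition `λ` is `m`-distinguished if and only if
its transpose `λ'` belongs to `Φ_{l-m}`. -/
theorem isDistinguished_iff_conj_mem_Phi (l m : ℕ) (hm : 0 < m) (hml : m < l)
    (p : ℕ → ℕ) (hp : IsPartition p) (hres : IsLRestricted l p) :
    IsDistinguished l m p ↔ conjP p ∈ Phi l (l - m) := by
  have hlm : 1 ≤ l - m := by omega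
  obtain ⟨hpos, hzero⟩ := plen_pos_iff p hp
  -- Key intermediate characterization of distinguished, for `l`-restricted `p`.
  have key : IsDistinguished l m p ↔
      p 0 ≤ l - m ∧ ∃ k, (∀ i, i < k → p i = l - m) ∧ p k < l - m ∧ p (k + m) = 0 := by
    constructor
    · rintro ⟨k, a, pb, hpb, hpb0, hamono, ha0, hazero, hpeq⟩
      -- `l`-restrictedness forces `pb = 0`.
      have hpbstep : ∀ i, pb i ≤ pb (i + 1) := by
        intro i
        by_contra hcon
        push_neg at hcon
        have hc : (if i + 1 < k then l - m else a (i + 1 - k)) ≤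
            (if i < k then l - m else a (i - k)) := by
          rcases lt_or_ge i k with h1 | h1
          · rcases lt_or_ge (i + 1) k with h2 | h2
            · rw [if_pos h1, if_pos h2]
            · rw [if_pos h1, if_neg (not_lt.mpr h2)]
              exact le_of_lt (lt_of_le_of_lt (hamono 0 (i + 1 - k) (Nat.zero_le _)) ha0)
          · rw [if_neg (not_lt.mpr h1), if_neg (by omega)]
            exact hamono (i - k) (i + 1 - k) (by omega)
        have h1 := hpeq i
        have h2 := hpeq (i + 1)
        have h3 := hres i
        have hmul : l * pb (i + 1) + l ≤ l * pb i := by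
          have := Nat.mul_le_mul_left l (Nat.succ_le_of_lt hcon)
          simpa [Nat.mul_succ] using this
        omega
      have hpbz : ∀ i, pb i = 0 := by
        obtain ⟨_, N, hN⟩ := hpb
        have step : ∀ n i, pb i ≤ pb (i + n) := by
          intro n
          induction n with
          | zero => intro i; simp
          | succ n ih =>
            intro i
            calc pb i ≤ pb (i + n) := ih i
              _ ≤ pb (i + n + 1) := hpbstep _
        intro i
        have h1 := step N i
        have h2 := hN (i + N) (by omega)
        omega
      have hp' : ∀ i, p i = if i < k then l - m else a (i - k) := by
        intro i
        rw [hpeq i, hpbz i, Nat.mul_zero, Nat.add_zero]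
      refine ⟨?_, k, ?_, ?_, ?_⟩
      · rw [hp' 0]
        split
        · exact le_rfl
        · exact le_of_lt (lt_of_le_of_lt (hamono 0 _ (Nat.zero_le _)) ha0)
      · intro i hi
        rw [hp' i, if_pos hi]
      · rw [hp' k, if_neg (lt_irrefl k), Nat.sub_self]
        exact ha0
      · rw [hp' (k + m), if_neg (by omega)]
        have hkm : k + m - k = m := by omega
        rw [hkm, hazero m le_rfl]
    · rintro ⟨h0, k, hk1, hk2, hk3⟩
      refine ⟨k, fun i => p (k + i), fun _ => 0,
        ⟨fun i j _ => le_rfl, 0, fun i _ => rfl⟩, hm, ?_, ?_, ?_, ?_⟩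
      · intro i j hij
        exact hp.1 _ _ (by omega)
      · simpa using hk2
      · intro i hi
        show p (k + i) = 0
        have h1 := hp.1 (k + m) (k + i) (by omega)
        omega
      · intro i
        show p i = (if i < k then l - m else p (k + (i - k))) + l * 0
        rcases lt_or_ge i k with h | h
        · rw [if_pos h, hk1 i h]
          simp
        · rw [if_neg (not_lt.mpr h)]
          have hki : k + (i - k) = i := by omega
          rw [hki]
          simp
  rw [key]
  simp only [Phi, Set.mem_setOf_eq]
  constructor
  · rintro ⟨h0, k, hk1, hk2, hk3⟩
    refine ⟨⟨conjP_anti p, p 0, fun j hj => conjP_zero_of_le p hp j hj⟩, ?_, ?_⟩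
    · exact Nat.sInf_le (show conjP p (l - m) = 0 from conjP_zero_of_le p hp _ h0)
    · have hlm2 : l - (l - m) = m := Nat.sub_sub_self hml.le
      rw [hlm2, tsub_le_iff_right]
      have hsub : (Finset.range (plen p)).filter (fun i => 0 < p i) ⊆
          ((Finset.range (plen p)).filter (fun i => l - m - 1 < p i)) ∪
            Finset.Ico k (k + m) := by
        intro i hi
        simp only [Finset.mem_filter, Finset.mem_range, Finset.mem_union,
          Finset.mem_Ico] at *
        rcases lt_or_ge (l - m - 1) (p i) with h | h
        · exact Or.inl ⟨hi.1, h⟩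
        · right
          constructor
          · by_contra hik
            push_neg at hik
            have := hk1 i hik
            omega
          · by_contra him
            push_neg at him
            have := hp.1 (k + m) i him
            omega
        -- mem_Ico
      have h1 : conjP p 0 ≤ _ := Finset.card_le_card hsub
      have h2 := Finset.card_union_le
        ((Finset.range (plen p)).filter (fun i => l - m - 1 < p i))
        (Finset.Ico k (k + m))
      have h3 : (Finset.Ico k (k + m)).card = m := by rw [Nat.card_Ico]; omega
      have h4 : conjP p (l - m - 1) =
          ((Finset.range (plen p)).filter (fun i => l - m - 1 < p i)).card := rfl
      omega
  · rintro ⟨hpart, hlen, hgap⟩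
    have hlm2 : l - (l - m) = m := Nat.sub_sub_self hml.le
    rw [hlm2] at hgap
    have hL := conjP_zeroth p hp
    -- p 0 ≤ l - m
    have h0 : p 0 ≤ l - m := by
      by_contra hcon
      push_neg at hcon
      have hL0 : 0 < plen p := by
        rcases Nat.eq_zero_or_pos (plen p) with h | h
        · have := hzero 0 (by omega)
          omega
        · exact h
      have hconj : conjP p (l - m) ≠ 0 := by
        have : 0 ∈ (Finset.range (plen p)).filter (fun i => l - m < p i) := by
          simp only [Finset.mem_filter, Finset.mem_range]
          exact ⟨hL0, hcon⟩
        intro hz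
        rw [show conjP p (l - m) =
          ((Finset.range (plen p)).filter (fun i => l - m < p i)).card from rfl,
          Finset.card_eq_zero] at hz
        rw [hz] at this
        exact absurd this (Finset.notMem_empty 0)
      obtain ⟨_, hczero⟩ := plen_pos_iff (conjP p) ⟨conjP_anti p, p 0,
        fun j hj => conjP_zero_of_le p hp j hj⟩
      exact hconj (hczero (l - m) hlen)
    -- define k
    set S : Set ℕ := {i | p i ≠ l - m} with hS
    have hSne : S.Nonempty := by
      obtain ⟨_, N, hN⟩ := hp
      exact ⟨N, by simp [hS, hN N le_rfl]; omega⟩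
    set k := sInf S with hk
    have hk1 : ∀ i, i < k → p i = l - m := by
      intro i hi
      by_contra hne
      exact absurd (Nat.sInf_le (show i ∈ S from hne)) (not_le.mpr hi)
    have hk2 : p k < l - m := by
      have h1 : p k ≠ l - m := Nat.sInf_mem hSne
      have h2 : p k ≤ p 0 := hp.1 0 k (Nat.zero_le k)
      omega
    refine ⟨h0, k, hk1, hk2, ?_⟩
    -- show plen p ≤ k + m
    rcases le_or_gt (plen p) k with hLk | hLk
    · exact hzero _ (by omega)
    · -- count = conjP p (l-m-1); show it equals k
      have hcount : conjP p (l - m - 1) ≤ k := by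
        rw [show conjP p (l - m - 1) =
          ((Finset.range (plen p)).filter (fun i => l - m - 1 < p i)).card from rfl]
        have hsub : (Finset.range (plen p)).filter (fun i => l - m - 1 < p i) ⊆
            Finset.range k := by
          intro i hi
          simp only [Finset.mem_filter, Finset.mem_range] at *
          by_contra hik
          push_neg at hik
          have h1 := hp.1 k i hik
          omega
        have := Finset.card_le_card hsub
        simpa using this
      have hfin : plen p ≤ k + m := by omega
      exact hzero _ hfin
end
end

section
/- Let 0 < m < l. If λ ∈ Φ_m then e_l(λ) ≤ l, i.e. the l-edge of λ has at most l nodes (equivalently, λ has a single l-segment). -/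
noncomputable section

lemma removeLEdgeAux_zero (l n : ℕ) (q : ℕ → ℕ) (hq : q 0 = 0) (x : ℕ) :
    removeLEdgeAux l n q x = 0 := by
  cases n <;> simp [removeLEdgeAux, hq]

lemma pdeg_eq_sum (q : ℕ → ℕ) (K : ℕ)
    (hmono : ∀ i j, i ≤ j → q j ≤ q i) (hK : q K = 0) :
    pdeg q = ∑ i ∈ Finset.range K, q i := by
  have hne : {N | q N = 0}.Nonempty := ⟨K, hK⟩
  have hmem : q (plen q) = 0 := Nat.sInf_mem hne
  have hle : plen q ≤ K := Nat.sInf_le hK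
  unfold pdeg
  refine Finset.sum_subset (Finset.range_subset_range.2 hle) ?_
  intro x _ hx
  have hx' : plen q ≤ x := by simp [Finset.mem_range] at hx; omega
  exact Nat.le_zero.1 (hmem ▸ hmono _ _ hx')

lemma sum_sub_one_ge (f : ℕ → ℕ) (n : ℕ) :
    ∑ i ∈ Finset.range n, f i ≤ (∑ i ∈ Finset.range n, (f i - 1)) + n := by
  calc ∑ i ∈ Finset.range n, f i ≤ ∑ i ∈ Finset.range n, ((f i - 1) + 1) :=
        Finset.sum_le_sum fun i _ => by omega
    _ = _ := by rw [Finset.sum_add_distrib]; simp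

/-- Let `0 < m < l`. If `λ ∈ Φ_m` then `e_l(λ) ≤ l`. -/
theorem elen_le_of_mem_Phi (l m : ℕ) (hm : 0 < m) (hml : m < l)
    (p : ℕ → ℕ) (hp : p ∈ Phi l m) :
    elen l p ≤ l := by
  obtain ⟨⟨hmono, hev⟩, hlen, hgap⟩ := hp
  have hne : {N | p N = 0}.Nonempty := by
    obtain ⟨N, hN⟩ := hev; exact ⟨N, hN N le_rfl⟩
  have hzero : ∀ i, plen p ≤ i → p i = 0 := by
    intro i hi
    exact Nat.le_zero.1 ((Nat.sInf_mem hne : p (plen p) = 0) ▸ hmono _ _ hi)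
  have hpne : ∀ i, i < plen p → p i ≠ 0 := by
    intro i hi h0
    have h2 : plen p ≤ i := Nat.sInf_le (show i ∈ {N | p N = 0} from h0)
    omega
  rcases Nat.eq_zero_or_pos (plen p) with hL | hL
  · have : pdeg p = 0 := by unfold pdeg; rw [hL]; simp
    unfold elen; omega
  obtain ⟨n, hLn⟩ : ∃ n, plen p = n + 1 := ⟨plen p - 1, by omega⟩
  have hp0 : p 0 ≠ 0 := hpne 0 hL
  have hrem : removeLEdge l p = removeLEdgeAux l (n + 1) p := by
    rw [removeLEdge, hLn]
  by_cases h1 : p 0 + plen p - 1 ≤ l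
  · -- whole edge removed
    have hν : removeLEdge l p = fun i => p (i + 1) - 1 := by
      rw [hrem]; simp only [removeLEdgeAux, if_neg hp0, if_pos h1]
    have hpd : pdeg p = ∑ i ∈ Finset.range (n + 1), p i := by
      unfold pdeg; rw [hLn]
    have hνmono : ∀ i j, i ≤ j → p (j + 1) - 1 ≤ p (i + 1) - 1 :=
      fun i j hij => Nat.sub_le_sub_right (hmono _ _ (by omega)) 1
    have hνK : p (n + 1) - 1 = 0 := by
      rw [hzero (n + 1) (by omega)]
    have hpdν : pdeg (removeLEdge l p) = ∑ i ∈ Finset.range n, (p (i + 1) - 1) := by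
      rw [hν]; exact pdeg_eq_sum _ n hνmono hνK
    have hshift : ∑ i ∈ Finset.range (n + 1), p i
        = (∑ i ∈ Finset.range n, p (i + 1)) + p 0 := Finset.sum_range_succ' p n
    have hTU : ∑ i ∈ Finset.range n, p (i + 1)
        ≤ (∑ i ∈ Finset.range n, (p (i + 1) - 1)) + n := sum_sub_one_ge _ n
    unfold elen
    omega
  · -- first l-segment
    set h := firstSeg l p with hh
    have hS'ne : {h | 1 ≤ h ∧ l ≤ p 0 - p h + h}.Nonempty :=
      ⟨l, by omega, Nat.le_add_left l _⟩
    have hmem : 1 ≤ h ∧ l ≤ p 0 - p h + h := Nat.sInf_mem hS'ne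
    have hmin : ∀ i, 1 ≤ i → i < h → p 0 - p i + i < l := by
      intro i h1i hih
      have : i ∉ {h | 1 ≤ h ∧ l ≤ p 0 - p h + h} := Nat.notMem_of_lt_sInf hih
      simp only [Set.mem_setOf_eq, not_and, not_le] at this
      exact this h1i
    have hhm : m ≤ h := by
      by_contra h'
      have hmh : p (m - 1) ≤ p h := hmono h (m - 1) (by omega)
      have := hmem.2
      omega
    have hph : ∀ i, h ≤ i → p i = 0 := fun i hi => hzero i (by omega)
    have hν : removeLEdge l p = fun i =>
        if i + 1 < h then p (i + 1) - 1
        else if i + 1 = h then p 0 + h - 1 - l else 0 := by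
      rw [hrem]
      funext i
      show (if p 0 = 0 then (fun _ => 0)
        else if p 0 + plen p - 1 ≤ l then (fun i => p (i + 1) - 1)
        else fun i =>
          if i + 1 < firstSeg l p then p (i + 1) - 1
          else if i + 1 = firstSeg l p then p 0 + firstSeg l p - 1 - l
          else removeLEdgeAux l n (fun j => p (j + firstSeg l p)) (i - firstSeg l p)) i = _
      rw [if_neg hp0, if_neg h1]
      simp only [← hh]
      split_ifs with hc1 hc2
      · rfl
      · rfl
      · exact removeLEdgeAux_zero l n _ (by rw [hph (0 + h) (by omega)]) _
    set ν : ℕ → ℕ := fun i =>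
        if i + 1 < h then p (i + 1) - 1
        else if i + 1 = h then p 0 + h - 1 - l else 0 with hνdef
    have hνstep : ∀ k, ν (k + 1) ≤ ν k := by
      intro k
      by_cases hc : k + 2 < h
      · simp only [hνdef, if_pos hc, if_pos (show k + 1 < h by omega)]
        exact Nat.sub_le_sub_right (hmono _ _ (by omega)) 1
      by_cases hc2 : k + 2 = h
      · simp only [hνdef, if_neg (by omega : ¬ k + 1 + 1 < h),
          if_pos (show k + 1 + 1 = h by omega), if_pos (show k + 1 < h by omega)]
        have h1' := hmin (k + 1) (by omega) (by omega)
        have h2' : p (k + 1) ≤ p 0 := hmono 0 (k + 1) (by omega)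
        omega
      · simp only [hνdef, if_neg (by omega : ¬ k + 1 + 1 < h),
          if_neg (by omega : ¬ k + 1 + 1 = h)]
        exact Nat.zero_le _
    have hνmono : ∀ i j, i ≤ j → ν j ≤ ν i :=
      fun i j hij => antitone_nat_of_succ_le hνstep hij
    have hνh : ν h = 0 := by
      simp only [hνdef, if_neg (by omega : ¬ h + 1 < h), if_neg (by omega : ¬ h + 1 = h)]
    have hpdν : pdeg (removeLEdge l p) = ∑ i ∈ Finset.range h, ν i := by
      rw [hν, ← hνdef]; exact pdeg_eq_sum ν h hνmono hνh
    have hpd : pdeg p = ∑ i ∈ Finset.range h, p i :=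
      pdeg_eq_sum p h hmono (hph h le_rfl)
    obtain ⟨g, hg⟩ : ∃ g, h = g + 1 := ⟨h - 1, by omega⟩
    have hsumν : ∑ i ∈ Finset.range h, ν i
        = (∑ i ∈ Finset.range g, (p (i + 1) - 1)) + (p 0 + h - 1 - l) := by
      rw [hg, Finset.sum_range_succ]
      congr 1
      · refine Finset.sum_congr rfl fun i hi => ?_
        simp only [Finset.mem_range] at hi
        simp only [hνdef, if_pos (show i + 1 < h by omega)]
      · simp only [hνdef, if_neg (by omega : ¬ g + 1 < h), if_pos (show g + 1 = h by omega)]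
        omega
    have hsump : ∑ i ∈ Finset.range h, p i
        = (∑ i ∈ Finset.range g, p (i + 1)) + p 0 := by
      rw [hg]; exact Finset.sum_range_succ' p g
    have hTU : ∑ i ∈ Finset.range g, p (i + 1)
        ≤ (∑ i ∈ Finset.range g, (p (i + 1) - 1)) + g := sum_sub_one_ge _ g
    have hl2 : l ≤ p 0 + h := by
      have := hmem.2
      have := hph h le_rfl
      omega
    have hp0pos : 1 ≤ p 0 := by omega
    unfold elen
    rw [hpd, hpdν, hsumν, hsump]
    omega
end
end

section
/- Let 0 < m < l, let λ ∈ Φ_m, and let μ be the partition obtained by removing the l-edge from the Young diagram of λ. Then μ ∈ Φ_m. -/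
noncomputable section

/-- Let `0 < m < l`, `λ ∈ Φ_m`, and let `μ` be the partition obtained by removing the
`l`-edge from `λ`. Then `μ ∈ Φ_m`. -/
theorem removeLEdge_mem_Phi (l m : ℕ) (hm : 0 < m) (hml : m < l)
    (p : ℕ → ℕ) (hp : p ∈ Phi l m) :
    removeLEdge l p ∈ Phi l m := by
  obtain ⟨⟨hmono, N, hN⟩, hlen, hgap⟩ := hp
  have hne : {n | p n = 0}.Nonempty := ⟨N, hN N le_rfl⟩
  have hzero : ∀ i, plen p ≤ i → p i = 0 := by
    intro i hi
    have h0 : p (plen p) = 0 := Nat.sInf_mem hne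
    have := hmono _ _ hi
    omega
  by_cases h0 : p 0 = 0
  · have hL0 : plen p = 0 := Nat.eq_zero_of_le_zero (Nat.sInf_le h0)
    have heq : removeLEdge l p = fun _ => 0 := by
      unfold removeLEdge; rw [hL0]; rfl
    rw [heq]
    refine ⟨⟨fun i j _ => le_rfl, 0, fun i _ => rfl⟩, ?_, ?_⟩
    · have : plen (fun _ => (0:ℕ)) ≤ 0 := Nat.sInf_le rfl
      omega
    · simp
  · have hL1 : 1 ≤ plen p := by
      rcases Nat.eq_zero_or_pos (plen p) with h | h
      · exact absurd (hzero 0 h.le) h0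
      · exact h
    obtain ⟨K, hK⟩ : ∃ K, plen p = K + 1 := ⟨plen p - 1, by omega⟩
    by_cases hA : p 0 + plen p - 1 ≤ l
    · -- one segment: the whole edge is removed
      have heq : removeLEdge l p = fun i => p (i + 1) - 1 := by
        unfold removeLEdge
        rw [hK, removeLEdgeAux, if_neg h0, if_pos hA]
      rw [heq]
      refine ⟨⟨fun i j hij => ?_, N, fun i hi => ?_⟩, ?_, ?_⟩
      · show p (j + 1) - 1 ≤ p (i + 1) - 1
        have := hmono (i + 1) (j + 1) (by omega); omega
      · show p (i + 1) - 1 = 0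
        have := hN (i + 1) (by omega); omega
      · have hmem : p (m + 1) - 1 = 0 := by
          have := hzero (m + 1) (by omega); omega
        exact le_trans (Nat.sInf_le hmem) le_rfl
      · show p (0 + 1) - 1 - (p (m - 1 + 1) - 1) ≤ l - m
        rw [show m - 1 + 1 = m from by omega, Nat.zero_add]
        have h1 : p 1 ≤ p 0 := hmono 0 1 (by omega)
        have hpm0 : p m = 0 := hzero m hlen
        rcases eq_or_ne (p (m - 1)) 0 with h | h
        · omega
        · have hgem : m - 1 < plen p := by
            by_contra hh; push_neg at hh; exact h (hzero _ (by omega))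
          omega
    · -- two segments are impossible in Φ_m; firstSeg = plen p = m
      push_neg at hA
      have hpm1 : p (m - 1) ≠ 0 := by intro h; omega
      have hLm : plen p = m := by
        have : m - 1 < plen p := by
          by_contra hh; push_neg at hh; exact hpm1 (hzero _ (by omega))
        omega
      have hpm : p m = 0 := hzero m (by omega)
      have hfs : firstSeg l p = m := by
        have hmem : m ∈ {h | 1 ≤ h ∧ l ≤ p 0 - p h + h} := by
          refine ⟨hm, ?_⟩
          rw [hpm]; omega
        refine le_antisymm (Nat.sInf_le hmem) ?_
        by_contra hh
        push_neg at hh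
        obtain ⟨h1, h2⟩ := Nat.sInf_mem (⟨m, hmem⟩ : {h | 1 ≤ h ∧ l ≤ p 0 - p h + h}.Nonempty)
        have hmono' : p (m - 1) ≤ p (sInf {h | 1 ≤ h ∧ l ≤ p 0 - p h + h}) :=
          hmono _ _ (by unfold firstSeg at hh; omega)
        unfold firstSeg at hh
        omega
      have heqB : removeLEdge l p = fun i =>
          if i + 1 < m then p (i + 1) - 1
          else if i + 1 = m then p 0 + m - 1 - l else 0 := by
        funext i
        unfold removeLEdge
        rw [hK, removeLEdgeAux, if_neg h0, if_neg (by omega : ¬ p 0 + plen p - 1 ≤ l), hfs]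
        by_cases hc1 : i + 1 < m
        · simp [hc1]
        · by_cases hc2 : i + 1 = m
          · simp [hc1, hc2]
          · simp only [if_neg hc1, if_neg hc2]
            exact removeLEdgeAux_zero l K _ (by simpa using hpm) _
      rw [heqB]
      have step : ∀ i, (if i + 1 + 1 < m then p (i + 1 + 1) - 1
          else if i + 1 + 1 = m then p 0 + m - 1 - l else 0) ≤
          (if i + 1 < m then p (i + 1) - 1
          else if i + 1 = m then p 0 + m - 1 - l else 0) := by
        intro i
        by_cases h1 : i + 2 < m
        · have hx : i + 1 < m := by omega
          have := hmono (i + 1) (i + 2) (by omega)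
          simp only [show i + 1 + 1 = i + 2 from rfl, if_pos h1, if_pos hx]
          omega
        · by_cases h2 : i + 2 = m
          · have hx : i + 1 < m := by omega
            have h3 : p (m - 1) ≤ p (i + 1) := hmono _ _ (by omega)
            simp only [show i + 1 + 1 = i + 2 from rfl, if_neg h1, if_pos h2, if_pos hx]
            omega
          · simp only [show i + 1 + 1 = i + 2 from rfl, if_neg h1, if_neg h2]
            exact Nat.zero_le _
      have hanti : Antitone (fun i =>
          if i + 1 < m then p (i + 1) - 1
          else if i + 1 = m then p 0 + m - 1 - l else 0) :=
        antitone_nat_of_succ_le step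
      refine ⟨⟨fun i j hij => hanti hij, m, fun i hi => ?_⟩, ?_, ?_⟩
      · show (if i + 1 < m then p (i + 1) - 1
          else if i + 1 = m then p 0 + m - 1 - l else 0) = 0
        rw [if_neg (by omega), if_neg (by omega)]
      · have hmem : (if m + 1 < m then p (m + 1) - 1
            else if m + 1 = m then p 0 + m - 1 - l else 0) = 0 := by
          rw [if_neg (by omega), if_neg (by omega)]
        exact Nat.sInf_le hmem
      · show (if 0 + 1 < m then p (0 + 1) - 1
          else if 0 + 1 = m then p 0 + m - 1 - l else 0) -
          (if m - 1 + 1 < m then p (m - 1 + 1) - 1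
          else if m - 1 + 1 = m then p 0 + m - 1 - l else 0) ≤ l - m
        rcases eq_or_ne m 1 with h | h
        · subst h; simp
        · rw [if_pos (by omega : 0 + 1 < m), if_neg (by omega : ¬ (m - 1 + 1 < m)),
            if_pos (by omega : m - 1 + 1 = m)]
          have h1 : p (0 + 1) ≤ p 0 := hmono 0 (0 + 1) (by omega)
          omega
end
end

section
/- Let 0 < m < l, let λ be an m-distinguished partition, and let n ≥ ℓ(λ). Viewing λ as the n-tuple (λ_1, …, λ_n), one has λ_1 ≤ m(l−1), and the partition λ† = (m(l−1) − λ_n, m(l−1) − λ_{n−1}, …, m(l−1) − λ_1) is again m-distinguished. -/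
noncomputable section

/-- Let `0 < m < l`, let `λ` be an `m`-distinguished partition and `n ≥ ℓ(λ)`. Then
`λ_1 ≤ m(l-1)` and the reflected partition
`λ† = (m(l-1) - λ_n, …, m(l-1) - λ_1)` is again `m`-distinguished. -/
theorem dagger_isDistinguished (l m : ℕ) (hm : 0 < m) (hml : m < l)
    (p : ℕ → ℕ) (hp : IsPartition p) (hdist : IsDistinguished l m p)
    (n : ℕ) (hn : plen p ≤ n) :
    p 0 ≤ m * (l - 1) ∧
      IsDistinguished l m (fun i => if i < n then m * (l - 1) - p (n - 1 - i) else 0) := by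
  obtain ⟨k, a, pb, hpb, hpb0, haM, ha0, haz, hrep⟩ := hdist
  obtain ⟨lam0, hlam0_def⟩ : ∃ f : ℕ → ℕ, f = fun i => if i < k then l - m else a (i - k) :=
    ⟨_, rfl⟩
  have hrep' : ∀ i, p i = lam0 i + l * pb i := by
    intro i
    simp only [hlam0_def]
    exact hrep i
  have hml' : m ≤ l := hml.le
  have h1m : 1 ≤ m := hm
  have h1l : 1 ≤ l := le_trans h1m hml'
  have hlm_pos : 0 < l - m := by omega
  have hpb_le : ∀ i, pb i ≤ m - 1 := by
    intro i
    have := hpb.1 0 i (Nat.zero_le i)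
    omega
  have hlam0_mono : ∀ i j, i ≤ j → lam0 j ≤ lam0 i := by
    intro i j hij
    by_cases hjk : j < k
    · have hik : i < k := lt_of_le_of_lt hij hjk
      simp [hlam0_def, hjk, hik]
    · by_cases hik : i < k
      · have h := haM 0 (j - k) (Nat.zero_le _)
        simp only [hlam0_def, if_neg hjk, if_pos hik]
        omega
      · simp only [hlam0_def, if_neg hjk, if_neg hik]
        exact haM _ _ (by omega)
  have hlam0_le : ∀ i, lam0 i ≤ l - m := by
    intro i
    have h := hlam0_mono 0 i (Nat.zero_le i)
    have h0 : lam0 0 ≤ l - m := by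
      simp only [hlam0_def]
      split
      · exact le_refl _
      · simp only [Nat.zero_sub]
        omega
    omega
  have key : l - m + l * (m - 1) = m * (l - 1) := by
    zify [hml', h1m, h1l]
    ring
  have hp_le : ∀ i, p i ≤ m * (l - 1) := by
    intro i
    have h1 := hlam0_le i
    have h2 : l * pb i ≤ l * (m - 1) := Nat.mul_le_mul_left l (hpb_le i)
    have h3 := hrep' i
    linarith
  -- s : number of nonzero parts of a
  have hsne : ({j | a j = 0} : Set ℕ).Nonempty := ⟨m, haz m le_rfl⟩
  obtain ⟨s, hs_mem, hs_le, hs_pos⟩ :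
      ∃ s : ℕ, a s = 0 ∧ s ≤ m ∧ ∀ j, j < s → a j ≠ 0 := by
    refine ⟨sInf {j | a j = 0}, Nat.sInf_mem hsne, Nat.sInf_le (haz m le_rfl), ?_⟩
    intro j hj h
    exact Nat.notMem_of_lt_sInf hj h
  have haz' : ∀ j, s ≤ j → a j = 0 := by
    intro j hj
    have := haM s j hj
    omega
  have hp_pos : ∀ i, i < k + s → p i ≠ 0 := by
    intro i hi h0
    rw [hrep' i] at h0
    have h1 : lam0 i = 0 := Nat.eq_zero_of_add_eq_zero_right h0
    by_cases hik : i < k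
    · simp only [hlam0_def, if_pos hik] at h1
      omega
    · simp only [hlam0_def, if_neg hik] at h1
      exact hs_pos (i - k) (by omega) h1
  have hplen_mem : p (plen p) = 0 := by
    obtain ⟨N, hN⟩ := hp.2
    have h : sInf {N | p N = 0} ∈ {N | p N = 0} := Nat.sInf_mem ⟨N, hN N le_rfl⟩
    exact h
  have hksn : k + s ≤ n := by
    refine le_trans ?_ hn
    by_contra h
    push_neg at h
    exact hp_pos _ h hplen_mem
  have hp_zero : ∀ i, n ≤ i → p i = 0 := by
    intro i hi
    have h1 : p i ≤ p (plen p) := hp.1 _ _ (le_trans hn hi)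
    omega
  have hzero : ∀ i, n ≤ i → lam0 i = 0 ∧ pb i = 0 := by
    intro i hi
    have h0 : lam0 i + l * pb i = 0 := by rw [← hrep' i]; exact hp_zero i hi
    have h1 : lam0 i = 0 := Nat.eq_zero_of_add_eq_zero_right h0
    have h2 : l * pb i = 0 := by omega
    rcases Nat.mul_eq_zero.mp h2 with h | h
    · omega
    · exact ⟨h1, h⟩
  refine ⟨hp_le 0, n - (k + s),
    (fun j => if j < k + s then l - m - lam0 (k + s - 1 - j) else 0),
    (fun i => if i < n then m - 1 - pb (n - 1 - i) else 0), ⟨?_, ?_⟩, ?_, ?_, ?_, ?_, ?_⟩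
  · -- pb' monotone
    intro i j hij
    by_cases hjn : j < n
    · have hin : i < n := lt_of_le_of_lt hij hjn
      simp only [if_pos hjn, if_pos hin]
      exact Nat.sub_le_sub_left (hpb.1 _ _ (by omega)) _
    · simp only [if_neg hjn]
      exact Nat.zero_le _
  · exact ⟨n, fun i hi => by simp [Nat.not_lt.mpr hi]⟩
  · -- pb' 0 < m
    by_cases hn0 : 0 < n
    · simp only [if_pos hn0]
      omega
    · simp only [if_neg hn0]
      omega
  · -- a' monotone
    intro i j hij
    by_cases hjk : j < k + s
    · have hik : i < k + s := lt_of_le_of_lt hij hjk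
      simp only [if_pos hjk, if_pos hik]
      exact Nat.sub_le_sub_left (hlam0_mono _ _ (by omega)) _
    · simp only [if_neg hjk]
      exact Nat.zero_le _
  · -- a' 0 < l - m
    by_cases hks : 0 < k + s
    · simp only [if_pos hks]
      have h1 : lam0 (k + s - 1 - 0) ≠ 0 := by
        by_cases hik : k + s - 1 - 0 < k
        · simp only [hlam0_def, if_pos hik]
          omega
        · simp only [hlam0_def, if_neg hik]
          exact hs_pos _ (by omega)
      have h2 := hlam0_le (k + s - 1 - 0)
      omega
    · simp only [if_neg hks]
      omega
  · -- a' i = 0 for m ≤ i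
    intro i hi
    by_cases hik : i < k + s
    · simp only [if_pos hik]
      have hidx : k + s - 1 - i < k := by omega
      simp only [hlam0_def, if_pos hidx]
      omega
    · simp [hik]
  · -- the representation
    intro i
    by_cases hin : i < n
    · simp only [if_pos hin]
      set t := n - 1 - i with ht_def
      have hcore : (if i < n - (k + s) then l - m
          else if i - (n - (k + s)) < k + s then l - m - lam0 (k + s - 1 - (i - (n - (k + s)))) else 0)
          = l - m - lam0 t := by
        by_cases hik' : i < n - (k + s)
        · have htk : ¬ t < k := by omega
          have hts : s ≤ t - k := by omega
          simp only [if_pos hik', hlam0_def, if_neg htk, haz' _ hts]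
          omega
        · have hj : i - (n - (k + s)) < k + s := by omega
          have hidx : k + s - 1 - (i - (n - (k + s))) = t := by omega
          simp only [if_neg hik', if_pos hj, hidx]
      rw [hcore, hrep' t]
      have h1 := hlam0_le t
      have h2 := hpb_le t
      have h3 : lam0 t + l * pb t ≤ m * (l - 1) := by rw [← hrep' t]; exact hp_le t
      zify [h1, h2, h3, hml', h1m, h1l]
      ring
    · have h1 : ¬ i < n - (k + s) := by omega
      have h2 : ¬ i - (n - (k + s)) < k + s := by omega
      simp only [if_neg hin, if_neg h1, if_neg h2, Nat.zero_add, Nat.mul_zero]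
end
end

section
/- Let (a_1, …, a_m) and (b_2, …, b_m) be partitions (weakly decreasing sequences of nonnegative integers) with a_2 + … + a_m = b_2 + … + b_m. Suppose (b_2, …, b_m) ⊵ (a_2, …, a_m) in the dominance order and (a_1, …, a_m) ⊵ Q(a_1, b_2, …, b_m), where Q(a_1, b_2, …, b_m) is the weakly decreasing rearrangement of a_1, b_2, …, b_m. Then (a_2, …, a_m) = (b_2, …, b_m). -/
noncomputable section

/-- Let `(a_1, …, a_m)` and `(b_2, …, b_m)` be partitions with equal sums
`a_2 + … + a_m = b_2 + … + b_m`. If `(b_2, …, b_m) ⊵ (a_2, …, a_m)` and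
`(a_1, …, a_m) ⊵ Q(a_1, b_2, …, b_m)` (where `Q` denotes the weakly decreasing
rearrangement), then `(a_2, …, a_m) = (b_2, …, b_m)`. -/
theorem dominance_rearrangement_rigidity (m : ℕ) (hm : 1 ≤ m) (a b : ℕ → ℕ)
    (ha : ∀ i j, 1 ≤ i → i ≤ j → j ≤ m → a j ≤ a i)
    (hb : ∀ i j, 2 ≤ i → i ≤ j → j ≤ m → b j ≤ b i)
    (hsum : ∑ j ∈ Finset.Icc 2 m, a j = ∑ j ∈ Finset.Icc 2 m, b j)
    (hdom1 : ∀ i, 2 ≤ i → i ≤ m → ∑ j ∈ Finset.Icc 2 i, a j ≤ ∑ j ∈ Finset.Icc 2 i, b j)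
    (hdom2 : ∀ Q : ℕ → ℕ,
      (∀ i j, 1 ≤ i → i ≤ j → j ≤ m → Q j ≤ Q i) →
      ((((List.range m).map fun i => Q (i + 1)) : Multiset ℕ) =
        a 1 ::ₘ (((List.range (m - 1)).map fun i => b (i + 2)) : Multiset ℕ)) →
      ∀ i, i ≤ m → ∑ j ∈ Finset.Icc 1 i, Q j ≤ ∑ j ∈ Finset.Icc 1 i, a j) :
    ∀ i, 2 ≤ i → i ≤ m → a i = b i := by
 classical
  -- q: first index ≥ 2 that is out of range or has b q ≤ a 1
  have hP : ∃ q, 2 ≤ q ∧ (m < q ∨ b q ≤ a 1) := ⟨m + 1, by omega, Or.inl (by omega)⟩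
  set q := Nat.find hP with hqdef
  obtain ⟨hq2, hqbad⟩ := Nat.find_spec hP
  have hqle : q ≤ m + 1 := Nat.find_min' hP ⟨by omega, Or.inl (by omega)⟩
  have hlt : ∀ j, 2 ≤ j → j < q → j ≤ m ∧ a 1 < b j := by
    intro j hj2 hjq
    have := Nat.find_min hP hjq
    simp only [not_and, not_or, not_lt, not_le] at this
    exact this hj2
  set p := q - 2 with hpdef
  have hp1m : p + 1 ≤ m := by omega
  have hkey1 : ∀ j, 2 ≤ j → j ≤ p + 1 → a 1 < b j := by
    intro j hj2 hjp
    exact (hlt j hj2 (by omega)).2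
  have hkey2 : ∀ j, p + 2 ≤ j → j ≤ m → b j ≤ a 1 := by
    intro j hj hjm
    have hq : b q ≤ a 1 := by
      rcases hqbad with h | h
      · omega
      · exact h
    have : b j ≤ b q := hb q j hq2 (by omega) hjm
    omega
  set Q : ℕ → ℕ := fun j => if j ≤ p then b (j + 1) else if j = p + 1 then a 1 else b j
    with hQdef
  -- monotonicity of Q
  have hQmono : ∀ i j, 1 ≤ i → i ≤ j → j ≤ m → Q j ≤ Q i := by
    intro i j hi1 hij hjm
    simp only [hQdef]
    by_cases hjp : j ≤ p
    · rw [if_pos hjp, if_pos (show i ≤ p by omega)]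
      exact hb (i + 1) (j + 1) (by omega) (by omega) (by omega)
    · by_cases hip : i ≤ p
      · rw [if_neg hjp, if_pos hip]
        by_cases hje : j = p + 1
        · rw [if_pos hje]
          exact le_of_lt (hkey1 (i + 1) (by omega) (by omega))
        · rw [if_neg hje]
          exact le_of_lt (lt_of_le_of_lt (hkey2 j (by omega) hjm)
            (hkey1 (i + 1) (by omega) (by omega)))
      · rw [if_neg hjp, if_neg hip]
        by_cases hie : i = p + 1
        · rw [if_pos hie]
          by_cases hje : j = p + 1
          · rw [if_pos hje]
          · rw [if_neg hje]
            exact hkey2 j (by omega) hjm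
        · rw [if_neg hie]
          have hje : ¬ j = p + 1 := by omega
          rw [if_neg hje]
          exact hb i j (by omega) hij hjm
 -- multiset equality
  have hQmulti : ((((List.range m).map fun i => Q (i + 1)) : Multiset ℕ) =
      a 1 ::ₘ (((List.range (m - 1)).map fun i => b (i + 2)) : Multiset ℕ)) := by
    obtain ⟨r, hr⟩ : ∃ r, m = p + 1 + r := ⟨m - 1 - p, by omega⟩
    have hr1 : List.range m = List.range p ++ [p] ++ (List.range r).map (p + 1 + ·) := by
      rw [hr, List.range_add, List.range_succ]
    have hr2 : List.range (m - 1) = List.range p ++ (List.range r).map (p + ·) := by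
      rw [show m - 1 = p + r by omega, List.range_add]
    rw [hr1, hr2]
    simp only [List.map_append, List.map_map, List.map_cons]
    have e1 : (List.range p).map (fun i => Q (i + 1)) =
        (List.range p).map (fun i => b (i + 2)) := by
      apply List.map_congr_left
      intro x hx
      have hxp : x < p := List.mem_range.mp hx
      simp only [hQdef]
      rw [if_pos (show x + 1 ≤ p by omega)]
    have e2 : Q (p + 1) = a 1 := by
      simp only [hQdef]
      rw [if_neg (show ¬ p + 1 ≤ p by omega)]
      simp
    have e3 : ((List.range r).map ((fun i => Q (i + 1)) ∘ (p + 1 + ·))) =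
        ((List.range r).map ((fun i => b (i + 2)) ∘ (p + ·))) := by
      apply List.map_congr_left
      intro x hx
      simp only [Function.comp, hQdef]
      rw [if_neg (by omega), if_neg (by omega)]
      congr 1
      omega
    rw [e1, e2, e3]
    rw [← Multiset.coe_add, ← Multiset.coe_add, ← Multiset.coe_add]
    simp only [← Multiset.cons_coe, ← Multiset.singleton_add]
    abel
  -- prefix sums of Q
  have hsumQ : ∀ i, i ≤ m → ∑ j ∈ Finset.Icc 1 i, Q j =
      if i ≤ p then ∑ j ∈ Finset.Icc 2 (i + 1), b j else a 1 + ∑ j ∈ Finset.Icc 2 i, b j := by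
    intro i
    induction i with
    | zero =>
      intro _
      rw [if_pos (Nat.zero_le p)]
      simp
    | succ n ih =>
      intro h
      have ihn := ih (by omega)
      rw [Finset.sum_Icc_succ_top (by omega : 1 ≤ n + 1)]
      by_cases h1 : n + 1 ≤ p
      · rw [if_pos h1]
        rw [ihn, if_pos (by omega)]
        rw [Finset.sum_Icc_succ_top (by omega : 2 ≤ n + 1 + 1)]
        congr 1
        simp only [hQdef]
        rw [if_pos h1]
      · by_cases h2 : n + 1 = p + 1
        · rw [if_neg h1]
          rw [ihn, if_pos (by omega)]
          have : Q (n + 1) = a 1 := by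
            simp only [hQdef]
            rw [if_neg (by omega), if_pos h2]
          rw [this, h2]
          omega
        · rw [if_neg h1]
          rw [ihn, if_neg (by omega)]
          have : Q (n + 1) = b (n + 1) := by
            simp only [hQdef]
            rw [if_neg (by omega), if_neg h2]
          rw [this, Finset.sum_Icc_succ_top (by omega : 2 ≤ n + 1)]
          omega
  -- split of Icc 1 i
  have hsplit : ∀ (f : ℕ → ℕ) i, 1 ≤ i →
      ∑ j ∈ Finset.Icc 1 i, f j = f 1 + ∑ j ∈ Finset.Icc 2 i, f j := by
    intro f i hi
    rw [show Finset.Icc 1 i = insert 1 (Finset.Icc 2 i) by ext x; simp; omega,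
      Finset.sum_insert (by simp)]
  -- key inequality
  have hle : ∀ i, 2 ≤ i → i ≤ m → ∑ j ∈ Finset.Icc 2 i, b j ≤ ∑ j ∈ Finset.Icc 2 i, a j := by
    intro i h2 him
    have hup := hdom2 Q hQmono hQmulti i him
    rw [hsumQ i him, hsplit a i (by omega)] at hup
    by_cases hip : i ≤ p
    · rw [if_pos hip, Finset.sum_Icc_succ_top (by omega : 2 ≤ i + 1)] at hup
      have := hkey1 (i + 1) (by omega) (by omega)
      omega
    · rw [if_neg hip] at hup
      omega
  have heq : ∀ i, 2 ≤ i → i ≤ m → ∑ j ∈ Finset.Icc 2 i, a j = ∑ j ∈ Finset.Icc 2 i, b j :=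
    fun i h2 him => le_antisymm (hdom1 i h2 him) (hle i h2 him)
  intro i h2 him
  have e1 := heq i h2 him
  have e2 : ∑ j ∈ Finset.Icc 2 (i - 1), a j = ∑ j ∈ Finset.Icc 2 (i - 1), b j := by
    by_cases h : i = 2
    · subst h
      simp
    · exact heq (i - 1) (by omega) (by omega)
  rw [show i = (i - 1) + 1 by omega,
    Finset.sum_Icc_succ_top (by omega : 2 ≤ (i - 1) + 1),
    Finset.sum_Icc_succ_top (by omega : 2 ≤ (i - 1) + 1)] at e1
  rw [show i = (i - 1) + 1 by omega]
  omega
end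
end

section
/- Let λ be a nonzero edge l-connected partition such that e_l(λ) is not divisible by l. Then the first part of the l-core of λ equals the first part of λ: core(λ)_1 = λ_1. -/
/-!
Work on the `l`-abacus of `λ` with `ℓ(λ)` beads, whose top bead sits at
`e(λ) = λ_1 + ℓ(λ) - 1`. Removing a skew `l`-hook slides one bead `l` places down its runner
into a gap, so if the runner of `e(λ)` is full up to `e(λ)` it stays so, and the `l`-core still
has a bead at `e(λ)`, forcing `core(λ)_1 ≥ λ_1`. Edge `l`-connectedness makes that runner full:
cutting off the first Mullineux component lowers both the top bead and `e_l` by exactly `l`, and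
once a single component is left, `e(λ) = e_l(λ) < l` because `l ∤ e_l(λ)`, so `e(λ)` is the
lowest position of its runner.
-/

noncomputable section

open Finset Relation

section Partition

variable {p q : ℕ → ℕ} {i k N : ℕ}

lemma IsPartition.antitone (hp : IsPartition p) : Antitone p := hp.1

lemma IsPartition.eq_zero_at_plen (hp : IsPartition p) : p (plen p) = 0 :=
  Nat.sInf_mem (hp.2.imp fun N hN => hN N le_rfl)

lemma IsPartition.eq_zero_of_plen_le (hp : IsPartition p) (h : plen p ≤ i) : p i = 0 :=
  Nat.eq_zero_of_le_zero (hp.eq_zero_at_plen ▸ hp.antitone h)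

lemma ne_zero_of_lt_plen (h : i < plen p) : p i ≠ 0 :=
  Nat.notMem_of_lt_sInf (s := {N | p N = 0}) h

lemma plen_le_of_eq_zero (h : p i = 0) : plen p ≤ i :=
  Nat.sInf_le h

lemma IsPartition.lt_plen_iff (hp : IsPartition p) : i < plen p ↔ p i ≠ 0 :=
  ⟨ne_zero_of_lt_plen, fun h => not_le.mp fun hle => h (hp.eq_zero_of_plen_le hle)⟩

lemma IsPartition.plen_pos (hp : IsPartition p) (hne : p 0 ≠ 0) : 0 < plen p :=
  hp.lt_plen_iff.mpr hne

lemma IsPartition.plen_le_of_le (hp : IsPartition p) (hle : ∀ i, q i ≤ p i) :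
    plen q ≤ plen p :=
  plen_le_of_eq_zero (Nat.eq_zero_of_le_zero (hp.eq_zero_at_plen ▸ hle (plen p)))

lemma IsPartition.pdeg_eq_sum (hp : IsPartition p) (h : plen p ≤ N) :
    pdeg p = ∑ i ∈ range N, p i :=
  sum_subset (range_subset_range.mpr h) fun _ _ hi =>
    hp.eq_zero_of_plen_le (not_lt.mp (mem_range.not.mp hi))

lemma IsPartition.shift (hp : IsPartition p) (h : ℕ) : IsPartition fun j => p (j + h) :=
  ⟨fun _ _ hij => hp.antitone (Nat.add_le_add_right hij h),
    hp.2.imp fun _ hN _ hi => hN _ (le_add_right hi)⟩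

lemma IsPartition.plen_shift (hp : IsPartition p) (h : ℕ) :
    plen (fun j => p (j + h)) = plen p - h := by
  refine le_antisymm (plen_le_of_eq_zero (hp.eq_zero_of_plen_le (by omega))) ?_
  by_contra hlt
  exact ne_zero_of_lt_plen (p := p) (by omega) (hp.shift h).eq_zero_at_plen

lemma IsPartition.pdeg_eq_sum_add_pdeg_shift (hp : IsPartition p) (h : ℕ) :
    pdeg p = ∑ i ∈ range h, p i + pdeg (fun j => p (j + h)) := by
  rw [hp.pdeg_eq_sum (N := h + (plen p - h)) (by omega), sum_range_add, pdeg, hp.plen_shift]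
  exact congrArg _ (sum_congr rfl fun i _ => by rw [add_comm])

lemma sum_range_pred_add (hk : k < plen p) :
    ∑ i ∈ range k, (p (i + 1) - 1) + k + p 0 = ∑ i ∈ range (k + 1), p i := by
  have hpos : ∀ i ∈ range k, p (i + 1) - 1 + 1 = p (i + 1) := fun i hi =>
    Nat.sub_add_cancel (Nat.one_le_iff_ne_zero.mpr (ne_zero_of_lt_plen (by simp at hi; omega)))
  rw [sum_range_succ', ← sum_congr rfl hpos, sum_add_distrib, sum_const, card_range,
    smul_eq_mul, mul_one]

end Partition

section Abacus

variable {l N : ℕ} {q y r : ℕ → ℕ}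

def beta (N : ℕ) (q : ℕ → ℕ) (i : ℕ) : ℕ := q i + (N - 1 - i)

def betaSet (N : ℕ) (q : ℕ → ℕ) : Set ℕ := beta N q '' Set.Iio N

lemma beta_lt_beta (hq : IsPartition q) {i j : ℕ} (hij : i < j) (hj : j < N) :
    beta N q j < beta N q i := by
  have := hq.antitone hij.le
  unfold beta
  omega

namespace IsHookRemoval

lemma bottom_lt (hl : 0 < l) (hr : IsPartition r) {a b : ℕ} (hab : a ≤ b)
    (hrows : ∀ i, a ≤ i → i < b → r i + 1 = y (i + 1)) (hlast : r b + l = y a + (b - a)) :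
    r b < y b := by
  rcases hab.eq_or_lt with rfl | hab
  · omega
  · have hrow := hrows (b - 1) (by omega) (by omega)
    rw [Nat.sub_add_cancel (by omega)] at hrow
    have := hr.antitone (Nat.sub_le b 1)
    omega

lemma le (hl : 0 < l) (hy : IsPartition y) (h : IsHookRemoval l y r) (i : ℕ) : r i ≤ y i := by
  obtain ⟨hr, a, b, hab, hbefore, hrows, hlast, hafter⟩ := h
  rcases lt_or_ge i a with hia | hai
  · exact (hbefore i hia).le
  rcases lt_or_ge i b with hib | hbi
  · have := hrows i hai hib
    have := hy.antitone (Nat.le_add_right i 1)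
    omega
  rcases hbi.eq_or_lt with rfl | hbi
  · exact (bottom_lt hl hr hab hrows hlast).le
  · exact (hafter i hbi).le

lemma pdeg_lt (hl : 0 < l) (hy : IsPartition y) (h : IsHookRemoval l y r) :
    pdeg r < pdeg y := by
  have hle := h.le hl hy
  obtain ⟨hr, a, b, hab, -, hrows, hlast, -⟩ := h
  have hb := bottom_lt hl hr hab hrows hlast
  rw [hr.pdeg_eq_sum (hy.plen_le_of_le hle)]
  exact sum_lt_sum (fun i _ => hle i) ⟨b, mem_range.mpr (hy.lt_plen_iff.mpr (by omega)), hb⟩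

lemma exists_bead_move (hl : 0 < l) (hy : IsPartition y) (hN : plen y ≤ N)
    (h : IsHookRemoval l y r) :
    ∃ a, l ≤ beta N y a ∧ beta N y a - l ∉ betaSet N y ∧
      ∀ x ∈ betaSet N y, x ≠ beta N y a → x ∈ betaSet N r := by
  obtain ⟨hr, a, b, hab, hbefore, hrows, hlast, hafter⟩ := h
  have hb := bottom_lt hl hr hab hrows hlast
  have hbN : b < N := (hy.lt_plen_iff.mpr (by omega)).trans_le hN
  refine ⟨a, by unfold beta; omega, ?_, ?_⟩
  · rintro ⟨j, hj : j < N, hjeq⟩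
    rcases le_or_gt j b with hjb | hjb
    · have : beta N y b ≤ beta N y j := by
        rcases hjb.eq_or_lt with rfl | hjb
        · exact le_rfl
        · exact (beta_lt_beta hy hjb hbN).le
      unfold beta at hjeq this
      omega
    · have := beta_lt_beta hr hjb hj
      unfold beta at hjeq this
      rw [hafter j hjb] at this
      omega
  · rintro x ⟨j, hj : j < N, rfl⟩ hja
    rcases lt_trichotomy j a with hja' | rfl | hja'
    · exact ⟨j, hj, by simp only [beta, hbefore j hja']⟩
    · exact absurd rfl hja
    rcases le_or_gt j b with hjb | hjb
    · have hrow := hrows (j - 1) (by omega) (by omega)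
      rw [Nat.sub_add_cancel (by omega)] at hrow
      exact ⟨j - 1, by simp only [Set.mem_Iio]; omega, by unfold beta; omega⟩
    · exact ⟨j, hj, by simp only [beta, hafter j hjb]⟩

end IsHookRemoval

end Abacus

section Core

variable {l N M : ℕ} {p q y r : ℕ → ℕ}

lemma exists_isCoreOf (hl : 0 < l) (hp : IsPartition p) : ∃ q, IsCoreOf l p q := by
  induction hn : pdeg p using Nat.strong_induction_on generalizing p with
  | _ n ih =>
  by_cases hrem : ∃ r, IsHookRemoval l p r
  · obtain ⟨r, hr⟩ := hrem
    obtain ⟨q, hrq, hq⟩ := ih _ (hn ▸ hr.pdeg_lt hl hp) hr.1 rfl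
    exact ⟨q, .head hr hrq, hq⟩
  · exact ⟨p, .refl, not_exists.mp hrem⟩

lemma isCoreOf_lCore (hl : 0 < l) (hp : IsPartition p) : IsCoreOf l p (lCore l p) :=
  Classical.epsilon_spec (exists_isCoreOf hl hp)

lemma isPartition_and_le_of_reflTransGen (hl : 0 < l) (hp : IsPartition p)
    (h : ReflTransGen (fun x y => IsHookRemoval l x y) p q) :
    IsPartition q ∧ ∀ i, q i ≤ p i := by
  induction h with
  | refl => exact ⟨hp, fun _ => le_rfl⟩
  | tail _ hyr ih => exact ⟨hyr.1, fun i => (hyr.le hl ih.1 i).trans (ih.2 i)⟩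

/-- On the `l`-abacus of `q` with `N` beads, every position `x ≤ M` on the runner of `M`
carries a bead. -/
def RunnerFull (l N : ℕ) (q : ℕ → ℕ) (M : ℕ) : Prop :=
  ∀ x ≤ M, x ≡ M [MOD l] → x ∈ betaSet N q

lemma RunnerFull.of_isHookRemoval (hl : 0 < l) (hy : IsPartition y) (hN : plen y ≤ N)
    (hM : y 0 + (N - 1) ≤ M) (hfull : RunnerFull l N y M) (h : IsHookRemoval l y r) :
    RunnerFull l N r M := by
  obtain ⟨a, hla, hgap, hkeep⟩ := h.exists_bead_move hl hy hN
  have ha : beta N y a ≤ M := by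
    have := hy.antitone (Nat.zero_le a)
    unfold beta
    omega
  refine fun x hxM hx => hkeep x (hfull x hxM hx) fun hxa => hgap (hfull _ (by omega) ?_)
  rw [← Nat.add_modulus_modEq_iff, Nat.sub_add_cancel hla, ← hxa]
  exact hx

lemma RunnerFull.of_reflTransGen (hl : 0 < l) (hp : IsPartition p)
    (hM : p 0 + (plen p - 1) ≤ M) (hfull : RunnerFull l (plen p) p M)
    (h : ReflTransGen (fun x y => IsHookRemoval l x y) p q) : RunnerFull l (plen p) q M := by
  induction h with
  | refl => exact hfull
  | tail hpy hyr ih =>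
    obtain ⟨hy, hyp⟩ := isPartition_and_le_of_reflTransGen hl hp hpy
    exact ih.of_isHookRemoval hl hy (hp.plen_le_of_le hyp) (by have := hyp 0; omega) hyr

lemma RunnerFull.of_shift {h : ℕ} (hfull : RunnerFull l (N - h) (fun j => p (j + h)) M)
    (htop : M + l ∈ betaSet N p) : RunnerFull l N p (M + l) := by
  intro x hx hmod
  rcases hx.eq_or_lt with rfl | hlt
  · exact htop
  have hgap : l ≤ M + l - x := Nat.le_of_dvd (by omega) ((Nat.modEq_iff_dvd' hx).mp hmod)
  obtain ⟨i, hi : i < N - h, hix⟩ :=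
    hfull x (by omega) (hmod.trans (Nat.add_modulus_modEq_iff.mpr rfl))
  exact ⟨i + h, by simp only [Set.mem_Iio]; omega, by simp only [beta] at hix ⊢; omega⟩

lemma lCore_zero_eq_of_runnerFull (hl : 0 < l) (hp : IsPartition p)
    (hfull : RunnerFull l (plen p) p (p 0 + (plen p - 1))) : lCore l p 0 = p 0 := by
  have hchain := (isCoreOf_lCore hl hp).1
  obtain ⟨hq, hqp⟩ := isPartition_and_le_of_reflTransGen hl hp hchain
  obtain ⟨i, -, hi⟩ := hfull.of_reflTransGen hl hp le_rfl hchain _ le_rfl rfl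
  have := hq.antitone (Nat.zero_le i)
  have := hqp 0
  unfold beta at hi
  omega

end Core

section LEdge

variable {l : ℕ} {p : ℕ → ℕ}

lemma firstSeg_spec (hp : IsPartition p) :
    1 ≤ firstSeg l p ∧ l ≤ p 0 - p (firstSeg l p) + firstSeg l p := by
  refine Nat.sInf_mem (s := {h | 1 ≤ h ∧ l ≤ p 0 - p h + h})
    ⟨l + plen p + 1, by omega, ?_⟩
  rw [hp.eq_zero_of_plen_le (by omega : plen p ≤ l + plen p + 1)]
  omega

lemma lt_of_lt_firstSeg {k : ℕ} (hk : 1 ≤ k) (h : k < firstSeg l p) : p 0 - p k + k < l :=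
  not_le.mp fun h' => Nat.notMem_of_lt_sInf h ⟨hk, h'⟩

lemma IsPartition.plen_pos_of_lt_edge (hp : IsPartition p) (he : l < p 0 + plen p - 1) :
    0 < plen p :=
  hp.plen_pos fun h0 => by have := plen_le_of_eq_zero h0; omega

lemma firstSeg_le_plen (hp : IsPartition p) (he : l < p 0 + plen p - 1) :
    firstSeg l p ≤ plen p :=
  Nat.sInf_le ⟨hp.plen_pos_of_lt_edge he, by rw [hp.eq_zero_at_plen]; omega⟩

lemma lt_add_firstSeg (hp : IsPartition p) (he : l < p 0 + plen p - 1) :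
    l < p 0 + firstSeg l p := by
  obtain ⟨-, hspec⟩ := firstSeg_spec (l := l) hp
  rcases (firstSeg_le_plen hp he).lt_or_eq with hlt | heq
  · have := ne_zero_of_lt_plen hlt
    have := hp.antitone (Nat.zero_le (firstSeg l p))
    omega
  · omega

lemma removeLEdgeAux_of_eq_zero (n : ℕ) (h0 : p 0 = 0) : removeLEdgeAux l n p = fun _ => 0 := by
  cases n <;> simp [removeLEdgeAux, h0]

lemma removeLEdgeAux_eq_of_plen_le : ∀ n m (p : ℕ → ℕ), IsPartition p → plen p ≤ n →
    plen p ≤ m → removeLEdgeAux l n p = removeLEdgeAux l m p := by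
  intro n
  induction n with
  | zero =>
    intro m p hp hn _
    have h0 := hp.eq_zero_of_plen_le hn
    rw [removeLEdgeAux_of_eq_zero 0 h0, removeLEdgeAux_of_eq_zero m h0]
  | succ n ih =>
    intro m p hp hn hm
    by_cases h0 : p 0 = 0
    · rw [removeLEdgeAux_of_eq_zero _ h0, removeLEdgeAux_of_eq_zero _ h0]
    obtain ⟨m, rfl⟩ := Nat.exists_eq_add_one.mpr ((hp.plen_pos h0).trans_le hm)
    have hlen := hp.plen_shift (firstSeg l p)
    have := (firstSeg_spec (l := l) hp).1
    rw [removeLEdgeAux, removeLEdgeAux, ih m _ (hp.shift _) (by omega) (by omega)]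

lemma removeLEdgeAux_succ_apply (n : ℕ) (p : ℕ → ℕ) (i : ℕ) :
    removeLEdgeAux l (n + 1) p i =
      if p 0 = 0 then 0
      else if p 0 + plen p - 1 ≤ l then p (i + 1) - 1
      else if i + 1 < firstSeg l p then p (i + 1) - 1
      else if i + 1 = firstSeg l p then p 0 + firstSeg l p - 1 - l
      else removeLEdgeAux l n (fun j => p (j + firstSeg l p)) (i - firstSeg l p) := by
  have happ := apply_ite (fun f : ℕ → ℕ => f i)
  rw [removeLEdgeAux, happ, happ]

lemma removeLEdgeAux_interlace (hl : 0 < l) :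
    ∀ n (p : ℕ → ℕ), IsPartition p → plen p ≤ n →
      ∀ i, p (i + 1) - 1 ≤ removeLEdgeAux l n p i ∧ removeLEdgeAux l n p i ≤ p i - 1 := by
  intro n
  induction n with
  | zero =>
    intro p hp hn i
    simp [removeLEdgeAux, hp.eq_zero_of_plen_le (hn.trans (Nat.zero_le (i + 1)))]
  | succ n ih =>
    intro p hp hn i
    have hmono := hp.antitone (Nat.le_add_right i 1)
    have hh := (firstSeg_spec (l := l) hp).1
    rw [removeLEdgeAux_succ_apply]
    split_ifs with h0 hsmall hrow hcorner
    · have := hp.antitone (Nat.zero_le (i + 1))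
      omega
    · omega
    · omega
    · obtain ⟨-, hspec⟩ := firstSeg_spec (l := l) hp
      rw [← hcorner] at hspec ⊢
      have := hp.antitone (Nat.zero_le (i + 1))
      rcases Nat.eq_zero_or_pos i with rfl | hi
      · omega
      · have := lt_of_lt_firstSeg (l := l) (p := p) hi (by omega)
        have := hp.antitone (Nat.zero_le i)
        omega
    · have := ih _ (hp.shift (firstSeg l p)) (by rw [hp.plen_shift]; omega) (i - firstSeg l p)
      rwa [show i - firstSeg l p + 1 + firstSeg l p = i + 1 by omega,
        show i - firstSeg l p + firstSeg l p = i by omega] at this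

lemma removeLEdgeAux_eq_removeLEdge (hp : IsPartition p) {n : ℕ} (hn : plen p ≤ n) :
    removeLEdgeAux l n p = removeLEdge l p :=
  removeLEdgeAux_eq_of_plen_le n _ p hp hn le_rfl

lemma removeLEdge_interlace (hl : 0 < l) (hp : IsPartition p) (i : ℕ) :
    p (i + 1) - 1 ≤ removeLEdge l p i ∧ removeLEdge l p i ≤ p i - 1 :=
  removeLEdgeAux_interlace hl _ p hp le_rfl i

lemma removeLEdge_le (hl : 0 < l) (hp : IsPartition p) (i : ℕ) : removeLEdge l p i ≤ p i :=
  (removeLEdge_interlace hl hp i).2.trans (Nat.sub_le _ _)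

lemma IsPartition.removeLEdge (hl : 0 < l) (hp : IsPartition p) :
    IsPartition (removeLEdge l p) := by
  obtain ⟨N, hN⟩ := hp.2
  exact ⟨antitone_nat_of_succ_le fun i =>
      (removeLEdge_interlace hl hp (i + 1)).2.trans (removeLEdge_interlace hl hp i).1,
    N, fun i hi => Nat.eq_zero_of_le_zero (hN i hi ▸ removeLEdge_le hl hp i)⟩

lemma pdeg_removeLEdge (hl : 0 < l) (hp : IsPartition p) :
    pdeg (removeLEdge l p) = ∑ i ∈ range (plen p), removeLEdge l p i :=
  (hp.removeLEdge hl).pdeg_eq_sum (hp.plen_le_of_le (removeLEdge_le hl hp))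

lemma pdeg_removeLEdge_add_elen (hl : 0 < l) (hp : IsPartition p) :
    pdeg (removeLEdge l p) + elen l p = pdeg p := by
  have : pdeg (removeLEdge l p) ≤ pdeg p := by
    rw [pdeg_removeLEdge hl hp]
    exact sum_le_sum fun i _ => removeLEdge_le hl hp i
  unfold elen
  omega

lemma removeLEdge_of_le (hp : IsPartition p) (hne : p 0 ≠ 0) (he : p 0 + plen p - 1 ≤ l)
    (i : ℕ) : removeLEdge l p i = p (i + 1) - 1 := by
  rw [removeLEdge, ← Nat.sub_add_cancel (hp.plen_pos hne), removeLEdgeAux_succ_apply,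
    if_neg hne, if_pos he]

lemma removeLEdge_of_gt (hp : IsPartition p) (he : l < p 0 + plen p - 1) (i : ℕ) :
    removeLEdge l p i = if i + 1 < firstSeg l p then p (i + 1) - 1
      else if i + 1 = firstSeg l p then p 0 + firstSeg l p - 1 - l
      else removeLEdge l (fun j => p (j + firstSeg l p)) (i - firstSeg l p) := by
  have hN := hp.plen_pos_of_lt_edge he
  have := (firstSeg_spec (l := l) hp).1
  rw [removeLEdge, ← Nat.sub_add_cancel hN, removeLEdgeAux_succ_apply,
    if_neg (ne_zero_of_lt_plen hN), if_neg (by omega),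
    removeLEdgeAux_eq_removeLEdge (hp.shift _) (by rw [hp.plen_shift]; omega)]

lemma elen_of_eq_zero (h0 : p 0 = 0) : elen l p = 0 := by
  simp [elen, pdeg, Nat.le_zero.mp (plen_le_of_eq_zero h0)]

lemma ne_zero_of_not_dvd_elen (h : ¬ l ∣ elen l p) : p 0 ≠ 0 :=
  fun h0 => h (elen_of_eq_zero h0 ▸ dvd_zero l)

lemma elen_of_le (hl : 0 < l) (hp : IsPartition p) (hne : p 0 ≠ 0)
    (he : p 0 + plen p - 1 ≤ l) : elen l p = p 0 + plen p - 1 := by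
  obtain ⟨n, hn⟩ := Nat.exists_eq_add_one.mpr (hp.plen_pos hne)
  have hrem : pdeg (removeLEdge l p) = ∑ i ∈ range n, (p (i + 1) - 1) := by
    rw [pdeg_removeLEdge hl hp, hn, sum_range_succ, removeLEdge_of_le hp hne he n, ← hn,
      hp.eq_zero_at_plen, Nat.zero_sub, add_zero]
    exact sum_congr rfl fun i _ => removeLEdge_of_le hp hne he i
  have := sum_range_pred_add (p := p) (k := n) (by omega)
  rw [elen, hrem, pdeg, hn]
  omega

lemma sum_range_firstSeg_removeLEdge_add (hp : IsPartition p) (he : l < p 0 + plen p - 1) :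
    ∑ i ∈ range (firstSeg l p), removeLEdge l p i + l =
      ∑ i ∈ range (firstSeg l p), p i := by
  obtain ⟨k, hk⟩ := Nat.exists_eq_add_one.mpr (firstSeg_spec (l := l) hp).1
  have hcorner := lt_add_firstSeg hp he
  have hhN := firstSeg_le_plen hp he
  rw [hk, sum_range_succ, ← sum_range_pred_add (p := p) (by omega), removeLEdge_of_gt hp he k,
    if_neg (by omega), if_pos hk.symm,
    sum_congr rfl fun i hi => by rw [removeLEdge_of_gt hp he i, if_pos (by simp at hi; omega)]]
  omega

lemma elen_of_gt (hl : 0 < l) (hp : IsPartition p) (he : l < p 0 + plen p - 1) :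
    elen l p = l + elen l (fun j => p (j + firstSeg l p)) := by
  have hshift : (fun j => removeLEdge l p (j + firstSeg l p)) =
      removeLEdge l (fun j => p (j + firstSeg l p)) := funext fun j => by
    rw [removeLEdge_of_gt hp he, if_neg (by omega), if_neg (by omega), Nat.add_sub_cancel]
  have hrem := (hp.removeLEdge hl).pdeg_eq_sum_add_pdeg_shift (firstSeg l p)
  rw [hshift] at hrem
  have := hp.pdeg_eq_sum_add_pdeg_shift (firstSeg l p)
  have := sum_range_firstSeg_removeLEdge_add hp he
  have := pdeg_removeLEdge_add_elen hl hp
  have := pdeg_removeLEdge_add_elen hl (hp.shift (firstSeg l p))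
  omega

end LEdge

section Runner

variable {l : ℕ} {p : ℕ → ℕ}

lemma runnerFull_of_edge_le (hl : 0 < l) (hp : IsPartition p) (he : p 0 + plen p - 1 ≤ l)
    (hndvd : ¬ l ∣ elen l p) : RunnerFull l (plen p) p (p 0 + (plen p - 1)) := by
  have hne := ne_zero_of_not_dvd_elen hndvd
  have hN := hp.plen_pos hne
  have hlt : p 0 + (plen p - 1) < l := by
    rcases he.lt_or_eq with h | h
    · omega
    · exact absurd (elen_of_le hl hp hne he ▸ h ▸ dvd_refl l) hndvd
  intro x hx hmod
  rw [Nat.ModEq.eq_of_lt_of_lt hmod (by omega) hlt]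
  exact ⟨0, hN, by simp [beta]⟩

lemma runnerFull_of_edgeConnAux (hl : 0 < l) : ∀ m (p : ℕ → ℕ), IsPartition p →
    plen p ≤ m → edgeConnAux l m p → ¬ l ∣ elen l p →
    RunnerFull l (plen p) p (p 0 + (plen p - 1)) := by
  intro m
  induction m with
  | zero =>
    intro p hp hm _ hndvd
    exact absurd (hp.eq_zero_of_plen_le hm) (ne_zero_of_not_dvd_elen hndvd)
  | succ m ih =>
    intro p hp hm hconn hndvd
    by_cases he : p 0 + plen p - 1 ≤ l
    · exact runnerFull_of_edge_le hl hp he hndvd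
    replace he := not_le.mp he
    have hel := elen_of_gt hl hp he
    have hndvd' : ¬ l ∣ elen l (fun j => p (j + firstSeg l p)) :=
      fun hd => hndvd (hel ▸ dvd_add dvd_rfl hd)
    have hlong : ¬ elen l p ≤ l := by
      have : elen l (fun j => p (j + firstSeg l p)) ≠ 0 := fun h0 => hndvd' (h0 ▸ dvd_zero l)
      omega
    rw [edgeConnAux, if_neg hlong] at hconn
    obtain ⟨hjoin, hconn'⟩ := hconn
    have hh := (firstSeg_spec (l := l) hp).1
    have hhN : firstSeg l p < plen p :=
      hp.lt_plen_iff.mpr (by simpa using ne_zero_of_not_dvd_elen hndvd')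
    have hfull := ih _ (hp.shift _) (by rw [hp.plen_shift]; omega) hconn' hndvd'
    rw [hp.plen_shift, zero_add] at hfull
    have htop : p 0 + (plen p - 1) ∈ betaSet (plen p) p := ⟨0, hp.plen_pos_of_lt_edge he, rfl⟩
    rw [show p 0 + (plen p - 1) = p (firstSeg l p) + (plen p - firstSeg l p - 1) + l by omega]
      at htop ⊢
    exact hfull.of_shift htop

end Runner

theorem core_first_part_general (l : ℕ) (hl : 2 ≤ l) (p : ℕ → ℕ)
    (hp : IsPartition p)
    (hconn : EdgeLConnected l p) (hndvd : ¬ l ∣ elen l p) :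
    lCore l p 0 = p 0 :=
  lCore_zero_eq_of_runnerFull (by omega) hp
    (runnerFull_of_edgeConnAux (by omega) _ p hp le_rfl hconn hndvd)

/-- Let `λ` be a nonzero edge `l`-connected partition with `l ∤ e_l(λ)`. Then the first
part of the `l`-core of `λ` equals the first part of `λ`. -/
theorem core_first_part (l : ℕ) (hl : 2 ≤ l) (p : ℕ → ℕ)
    (hp : IsPartition p) (hne : p 0 ≠ 0)
    (hconn : EdgeLConnected l p) (hndvd : ¬ l ∣ elen l p) :
    lCore l p 0 = p 0 :=
  core_first_part_general l hl p hp hconn hndvd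

end
end
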